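/- (Generalized Gronwall) Let ν : [0, T] → [0, ∞) be bounded and measurable and satisfy ν(t) ≤ C(1 + ∫₀ᵗ (t − s)^{−1/2} ν(s) ds) for all t ∈ [0, T], with C ≥ 1. Then ν(t) ≤ C' for all t ∈ [0, T], where C' depends only on C and T. -/

import Mathlib

open MeasureTheory intervalIntegral

private def grM (C T : ℝ) : ℕ → ℝ
  | 0 => C
  | k+1 => 2*C + 8*C^2*T * grM C T k

private lemma grM_nonneg {C T : ℝ} (hC : 1 ≤ C) (hT : 0 ≤ T) : ∀ k, 0 ≤ grM C T k
  | 0 => by simpa [grM] using (by linarith : (0:ℝ) ≤ C)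
  | (k+1) => by
      have h1 := grM_nonneg hC hT k
      have h2 : 0 ≤ 8*C^2*T * grM C T k :=
        mul_nonneg (mul_nonneg (by positivity) hT) h1
      simp only [grM]; linarith

/-- Generalized Gronwall inequality: if a bounded measurable `ν : [0,T] → [0,∞)`
satisfies `ν(t) ≤ C(1 + ∫₀ᵗ (t−s)^{−1/2} ν(s) ds)` with `C ≥ 1`, then `ν` is bounded
on `[0,T]` by a constant depending only on `C` and `T`. -/
theorem stmt9 (C T : ℝ) (hC : 1 ≤ C) (hT : 0 < T) :
    ∃ C' : ℝ, ∀ ν : ℝ → ℝ, Measurable ν →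
      (∃ B : ℝ, ∀ t ∈ Set.Icc (0 : ℝ) T, ν t ≤ B) →
      (∀ t ∈ Set.Icc (0 : ℝ) T, 0 ≤ ν t) →
      (∀ t ∈ Set.Icc (0 : ℝ) T,
        ν t ≤ C * (1 + ∫ s in Set.Ioc (0 : ℝ) t, (t - s) ^ (-(1 / 2) : ℝ) * ν s)) →
      ∀ t ∈ Set.Icc (0 : ℝ) T, ν t ≤ C' := by
  have hC0 : (0:ℝ) < C := by linarith
  set ε : ℝ := (4*C)⁻¹ with hε_def
  have hε_pos : 0 < ε := by positivity
  set δ : ℝ := ε^2 with hδ_def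
  have hδ_pos : 0 < δ := by positivity
  have hεinv : ε⁻¹ = 4*C := by rw [hε_def, inv_inv]
  have hδ_half : δ ^ ((1/2):ℝ) = ε := by
    rw [hδ_def, ← Real.rpow_natCast ε 2, ← Real.rpow_mul hε_pos.le]
    norm_num
  have hδ_neg_half : δ ^ (-(1/2):ℝ) = ε⁻¹ := by
    rw [hδ_def, ← Real.rpow_natCast ε 2, ← Real.rpow_mul hε_pos.le]
    norm_num [Real.rpow_neg_one]
  refine ⟨grM C T (⌈T/δ⌉₊), ?_⟩
  rintro ν hmeas ⟨B, hB⟩ hpos hineq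
  -- kernel interval integrability
  have hker : ∀ t a b : ℝ, IntervalIntegrable (fun s => (t - s) ^ (-(1/2) : ℝ)) volume a b := by
    intro t a b
    have h := (intervalIntegral.intervalIntegrable_rpow' (a := t - a) (b := t - b)
      (by norm_num : (-1:ℝ) < -(1/2))).comp_sub_left t
    simpa using h
  have hmK : ∀ t : ℝ, Measurable fun s => (t - s) ^ (-(1/2):ℝ) * ν s := by
    intro t; fun_prop
  -- integrability of the full integrand
  have hint : ∀ t a b : ℝ, 0 ≤ a → a ≤ b → b ≤ t → b ≤ T →
      IntegrableOn (fun s => (t - s) ^ (-(1/2):ℝ) * ν s) (Set.Ioc a b) := by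
    intro t a b ha hab hbt hbT
    have hg : IntegrableOn (fun s => (t - s) ^ (-(1/2):ℝ) * B) (Set.Ioc a b) :=
      ((intervalIntegrable_iff_integrableOn_Ioc_of_le hab).mp (hker t a b)).mul_const B
    refine Integrable.mono' hg ((hmK t).aestronglyMeasurable) ?_
    refine (ae_restrict_iff' measurableSet_Ioc).mpr (ae_of_all _ ?_)
    intro s hs
    have h1 : (0:ℝ) ≤ t - s := by linarith [hs.2]
    have hK0 : 0 ≤ (t - s) ^ (-(1/2):ℝ) := Real.rpow_nonneg h1 _
    have hs' : s ∈ Set.Icc (0:ℝ) T := ⟨(ha.trans_lt hs.1).le, hs.2.trans hbT⟩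
    rw [Real.norm_eq_abs, abs_mul, abs_of_nonneg hK0, abs_of_nonneg (hpos s hs')]
    exact mul_le_mul_of_nonneg_left (hB s hs') hK0
  -- the kernel integral
  have hkerint : ∀ t a : ℝ, a ≤ t →
      ∫ s in Set.Ioc a t, (t - s) ^ (-(1/2):ℝ) = 2 * (t - a) ^ ((1/2):ℝ) := by
    intro t a hat
    rw [← intervalIntegral.integral_of_le hat,
      intervalIntegral.integral_comp_sub_left (fun x => x ^ (-(1/2):ℝ)) t, sub_self,
      integral_rpow (Or.inl (by norm_num))]
    rw [Real.zero_rpow (by norm_num)]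
    norm_num
    ring
  -- the main induction
  have key : ∀ k : ℕ, ∀ t ∈ Set.Icc (0:ℝ) T, t ≤ k * δ → ν t ≤ grM C T k := by
    intro k
    induction k with
    | zero =>
      intro t ht ht0
      have ht00 : t = 0 := le_antisymm (by simpa using ht0) ht.1
      subst ht00
      have := hineq 0 ht
      simpa [grM] using this
    | succ k IH =>
      intro t ht htk
      set τ := min (((k:ℝ)+1) * δ) T with hτ
      have hτ0 : 0 ≤ τ := le_min (by positivity) hT.le
      have hτT : τ ≤ T := min_le_right _ _
      have hτδ : τ ≤ ((k:ℝ)+1) * δ := min_le_left _ _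
      set S := ν '' Set.Icc 0 τ with hS
      have hSne : S.Nonempty := ⟨ν 0, 0, ⟨le_refl _, hτ0⟩, rfl⟩
      have hSbdd : BddAbove S := ⟨B, by rintro _ ⟨s, hs, rfl⟩; exact hB s ⟨hs.1, hs.2.trans hτT⟩⟩
      set h := sSup S with hh
      have hνh : ∀ s ∈ Set.Icc (0:ℝ) τ, ν s ≤ h := fun s hs => le_csSup hSbdd ⟨s, hs, rfl⟩
      have hh0 : 0 ≤ h := le_trans (hpos 0 ⟨le_refl _, hT.le⟩) (hνh 0 ⟨le_refl _, hτ0⟩)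
      have main : ∀ u ∈ Set.Icc (0:ℝ) τ, ν u ≤ C + 4*C^2*T * grM C T k + h / 2 := by
        intro u hu
        have huT : u ∈ Set.Icc (0:ℝ) T := ⟨hu.1, hu.2.trans hτT⟩
        have h1 := hineq u huT
        set a := max (u - δ) 0 with ha
        have ha0 : 0 ≤ a := le_max_right _ _
        have hau : a ≤ u := max_le (by linarith [hδ_pos]) hu.1
        have hi1 : IntegrableOn (fun s => (u - s) ^ (-(1/2):ℝ) * ν s) (Set.Ioc 0 a) :=
          hint u 0 a le_rfl ha0 hau (hau.trans huT.2)
        have hi2 : IntegrableOn (fun s => (u - s) ^ (-(1/2):ℝ) * ν s) (Set.Ioc a u) :=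
          hint u a u ha0 hau le_rfl huT.2
        have hsplit : ∫ s in Set.Ioc (0:ℝ) u, (u - s) ^ (-(1/2):ℝ) * ν s
            = (∫ s in Set.Ioc (0:ℝ) a, (u - s) ^ (-(1/2):ℝ) * ν s)
              + ∫ s in Set.Ioc a u, (u - s) ^ (-(1/2):ℝ) * ν s := by
          rw [← Set.Ioc_union_Ioc_eq_Ioc ha0 hau]
          exact setIntegral_union (Set.Ioc_disjoint_Ioc_of_le le_rfl) measurableSet_Ioc hi1 hi2
        -- far part
        have far : (∫ s in Set.Ioc (0:ℝ) a, (u - s) ^ (-(1/2):ℝ) * ν s)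
            ≤ ε⁻¹ * grM C T k * T := by
          have hMk0 : 0 ≤ grM C T k := grM_nonneg hC hT.le k
          have step : (∫ s in Set.Ioc (0:ℝ) a, (u - s) ^ (-(1/2):ℝ) * ν s)
              ≤ ∫ _s in Set.Ioc (0:ℝ) a, ε⁻¹ * grM C T k := by
            refine setIntegral_mono_on hi1 (integrableOn_const measure_Ioc_lt_top.ne)
              measurableSet_Ioc ?_
            intro s hs
            have hsa : s ≤ u - δ := by
              rcases le_or_gt (u - δ) 0 with hcase | hcase
              · have haz : a = 0 := max_eq_right hcase
                exact absurd (hs.2.trans_eq haz) (not_le.mpr hs.1)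
              · exact hs.2.trans_eq (max_eq_left hcase.le)
            have hδus : δ ≤ u - s := by linarith
            have hK : (u - s) ^ (-(1/2):ℝ) ≤ ε⁻¹ := by
              have h2 : (u - s) ^ (-(1/2):ℝ) ≤ δ ^ (-(1/2):ℝ) :=
                Real.rpow_le_rpow_of_nonpos hδ_pos hδus (by norm_num)
              rwa [hδ_neg_half] at h2
            have hsT : s ∈ Set.Icc (0:ℝ) T := ⟨hs.1.le, by linarith [huT.2]⟩
            have hsk : s ≤ (k:ℝ) * δ := by
              have : u ≤ ((k:ℝ)+1) * δ := hu.2.trans hτδ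
              linarith
            have hν : ν s ≤ grM C T k := IH s hsT hsk
            exact mul_le_mul hK hν (hpos s hsT) (by positivity)
          have hconst : (∫ _s in Set.Ioc (0:ℝ) a, ε⁻¹ * grM C T k)
              = a * (ε⁻¹ * grM C T k) := by
            rw [setIntegral_const, Measure.real, Real.volume_Ioc, smul_eq_mul, ENNReal.toReal_ofReal (by linarith)]
            ring_nf
          have haT : a ≤ T := hau.trans huT.2
          calc (∫ s in Set.Ioc (0:ℝ) a, (u - s) ^ (-(1/2):ℝ) * ν s)
              ≤ a * (ε⁻¹ * grM C T k) := by rw [← hconst]; exact step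
            _ ≤ T * (ε⁻¹ * grM C T k) :=
                mul_le_mul_of_nonneg_right haT (by positivity)
            _ = ε⁻¹ * grM C T k * T := by ring
        -- near part
        have hKint : IntegrableOn (fun s => (u - s) ^ (-(1/2):ℝ)) (Set.Ioc a u) :=
          (intervalIntegrable_iff_integrableOn_Ioc_of_le hau).mp (hker u a u)
        have near : (∫ s in Set.Ioc a u, (u - s) ^ (-(1/2):ℝ) * ν s) ≤ 2 * ε * h := by
          have step : (∫ s in Set.Ioc a u, (u - s) ^ (-(1/2):ℝ) * ν s)
              ≤ ∫ s in Set.Ioc a u, (u - s) ^ (-(1/2):ℝ) * h := by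
            refine setIntegral_mono_on hi2 (hKint.mul_const h) measurableSet_Ioc ?_
            intro s hs
            have hsτ : s ∈ Set.Icc (0:ℝ) τ := ⟨(ha0.trans_lt hs.1).le, hs.2.trans hu.2⟩
            exact mul_le_mul_of_nonneg_left (hνh s hsτ)
              (Real.rpow_nonneg (by linarith [hs.2]) _)
          rw [MeasureTheory.integral_mul_const, hkerint u a hau] at step
          have hua : u - a ≤ δ := by
            have := le_max_left (u - δ) 0
            simp only [← ha] at this
            linarith
          have hru : (u - a) ^ ((1/2):ℝ) ≤ ε := by
            have h2 : (u - a) ^ ((1/2):ℝ) ≤ δ ^ ((1/2):ℝ) :=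
              Real.rpow_le_rpow (by linarith) hua (by norm_num)
            rwa [hδ_half] at h2
          have h3 : 2 * (u - a) ^ ((1/2):ℝ) * h ≤ 2 * ε * h := by
            have := mul_le_mul_of_nonneg_right hru hh0
            nlinarith
          linarith
        -- combine
        have hI : (∫ s in Set.Ioc (0:ℝ) u, (u - s) ^ (-(1/2):ℝ) * ν s)
            ≤ ε⁻¹ * grM C T k * T + 2 * ε * h := by rw [hsplit]; linarith
        have hCI : C * (1 + ∫ s in Set.Ioc (0:ℝ) u, (u - s) ^ (-(1/2):ℝ) * ν s)
            ≤ C + 4*C^2*T * grM C T k + h / 2 := by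
          have hmul := mul_le_mul_of_nonneg_left hI hC0.le
          have hCε : C * (2 * ε * h) = h / 2 := by
            rw [hε_def]; field_simp; ring
          have hC4 : C * (ε⁻¹ * grM C T k * T) = 4*C^2*T * grM C T k := by
            rw [hεinv]; ring
          calc C * (1 + ∫ s in Set.Ioc (0:ℝ) u, (u - s) ^ (-(1/2):ℝ) * ν s)
              = C + C * ∫ s in Set.Ioc (0:ℝ) u, (u - s) ^ (-(1/2):ℝ) * ν s := by ring
            _ ≤ C + C * (ε⁻¹ * grM C T k * T + 2 * ε * h) := by linarith
            _ = C + 4*C^2*T * grM C T k + h / 2 := by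
                rw [mul_add, hCε, hC4]; ring
        exact h1.trans hCI
      have hhle : h ≤ C + 4*C^2*T * grM C T k + h/2 :=
        csSup_le hSne (by rintro _ ⟨s, hs, rfl⟩; exact main s hs)
      have hhle2 : h ≤ 2*C + 8*C^2*T * grM C T k := by linarith
      have htτ : t ≤ τ := le_min (by push_cast at htk ⊢; linarith) ht.2
      calc ν t ≤ h := hνh t ⟨ht.1, htτ⟩
        _ ≤ grM C T (k+1) := by simpa only [grM] using hhle2
  intro t ht
  refine key _ t ht ?_
  have h1 : T / δ ≤ (⌈T/δ⌉₊ : ℝ) := Nat.le_ceil _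
  have h2 : T ≤ (⌈T/δ⌉₊ : ℝ) * δ := by
    rw [div_le_iff₀ hδ_pos] at h1; linarith
  linarith [ht.2]
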